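/- Let k ≥ 2 and r ≥ 1 be integers. If λ ∈ ℝ is a root of P^k_{r+1}, then λ is an eigenvalue of the adjacency matrix of X_r^k, and the λ-eigenspace of A(X_r^k) has dimension at least k − 1. -/

import Mathlib

open Polynomial

/-- Vertices of the rooted tree of depth `r` in which each vertex at depth `i < r`
has `b i` children: a vertex is a word assigning to each position `i < m ≤ r`
a letter in `Fin (b i)`; the empty word (`m = 0`) is the root, and the depth of a
vertex is its length `m`. -/
abbrev BVertex (b : ℕ → ℕ) (r : ℕ) := Σ m : Fin (r + 1), (i : Fin (m : ℕ)) → Fin (b i)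

/-- `y` is a child of `x`: the word `y` extends the word `x` by one letter. -/
def BExt {b : ℕ → ℕ} {r : ℕ} (x y : BVertex b r) : Prop :=
  ∃ h : (y.1 : ℕ) = (x.1 : ℕ) + 1,
    ∀ i : Fin (x.1 : ℕ), y.2 ⟨(i : ℕ), by have := i.isLt; omega⟩ = x.2 i

/-- Adjacency in the rooted tree: the parent/child relation. -/
def BAdj {b : ℕ → ℕ} {r : ℕ} (x y : BVertex b r) : Prop := BExt x y ∨ BExt y x

open Classical in
/-- Adjacency matrix of the rooted tree with branching sequence `b` and depth `r`. -/
noncomputable def BAdjMatrix (b : ℕ → ℕ) (r : ℕ) : Matrix (BVertex b r) (BVertex b r) ℝ :=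
  fun x y => if BAdj x y then 1 else 0

/-- `lam` is an eigenvalue of the adjacency matrix of the tree. -/
def IsAdjEigenvalue (b : ℕ → ℕ) (r : ℕ) (lam : ℝ) : Prop :=
  ∃ v : BVertex b r → ℝ, v ≠ 0 ∧ (BAdjMatrix b r).mulVec v = lam • v

/-- Dimension of the `lam`-eigenspace of the adjacency matrix of the tree. -/
noncomputable def adjEigDim (b : ℕ → ℕ) (r : ℕ) (lam : ℝ) : ℕ :=
  Module.finrank ℝ
    (LinearMap.ker ((BAdjMatrix b r).mulVecLin - lam • LinearMap.id))

/-- The generalized Fibonacci polynomials `P^k_n ∈ ℝ[x]`: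
`P^k_0 = 0`, `P^k_1 = 1`, `P^k_n = x·P^k_{n-1} − k·P^k_{n-2}`. -/
noncomputable def Ppoly (k : ℕ) : ℕ → Polynomial ℝ
  | 0 => 0
  | 1 => 1
  | n + 2 => X * Ppoly k (n + 1) - C (k : ℝ) * Ppoly k n

noncomputable def ff (k : ℕ) (lam : ℝ) (m : ℕ) : ℝ := (Ppoly k m).eval lam / (k:ℝ)^m

lemma ff_zero (k : ℕ) (lam : ℝ) : ff k lam 0 = 0 := by simp [ff, Ppoly]

lemma ff_one (k : ℕ) (lam : ℝ) : ff k lam 1 = 1 / k := by simp [ff, Ppoly]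

lemma ff_rec (k : ℕ) (lam : ℝ) (hk : 0 < k) (m : ℕ) :
    ff k lam m + k * ff k lam (m+2) = lam * ff k lam (m+1) := by
  have hk' : (k:ℝ) ≠ 0 := by positivity
  simp only [ff, Ppoly, eval_sub, eval_mul, eval_X, eval_C]
  field_simp
  ring

lemma ff_leaf (k : ℕ) (lam : ℝ) (hk : 0 < k) (n : ℕ)
    (hroot : (Ppoly k (n+2)).eval lam = 0) :
    ff k lam n = lam * ff k lam (n+1) := by
  have hk' : (k:ℝ) ≠ 0 := by positivity
  simp only [Ppoly, eval_sub, eval_mul, eval_X, eval_C] at hroot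
  simp only [ff]
  field_simp
  linear_combination -(k:ℝ)^n * hroot

abbrev V (k r : ℕ) := BVertex (fun _ => k) r

abbrev mkV (k r m : ℕ) (hm : m ≤ r) (w : Fin m → Fin k) : V k r := ⟨⟨m, by omega⟩, w⟩

open Classical in
lemma sum_child (k r : ℕ) (v : V k r → ℝ) (m : ℕ) (hm : m ≤ r) (w : Fin m → Fin k) :
    ∑ y : V k r, (if BExt (mkV k r m hm w) y then v y else 0) =
      if h : m < r then ∑ a : Fin k, v (mkV k r (m+1) h (Fin.snoc w a)) else 0 := by
  rw [← Finset.univ_sigma_univ, Finset.sum_sigma]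
  by_cases h : m < r
  · rw [dif_pos h]
    rw [Finset.sum_eq_single_of_mem (⟨m+1, by omega⟩ : Fin (r+1)) (Finset.mem_univ _)]
    · have key : ∀ (a : Fin k) (u : Fin m → Fin k),
          BExt (mkV k r m hm w) ⟨⟨m+1, by omega⟩, (Fin.snocEquiv (fun _ : Fin (m+1) => Fin k)) (a, u)⟩ ↔ u = w := by
        intro a u
        constructor
        · rintro ⟨h1, hw⟩
          funext i
          have h2 := hw i
          simp only [Fin.snocEquiv_apply] at h2
          have h3 : Fin.snoc (α := fun _ : Fin (m+1) => Fin k) u a (Fin.castSucc i) = w i := h2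
          rwa [Fin.snoc_castSucc] at h3
        · rintro rfl
          refine ⟨rfl, fun i => ?_⟩
          simp only [Fin.snocEquiv_apply]
          show Fin.snoc (α := fun _ : Fin (m+1) => Fin k) u a (Fin.castSucc i) = u i
          exact Fin.snoc_castSucc ..
      refine (((Fin.snocEquiv (fun _ : Fin (m+1) => Fin k)).sum_comp (fun w' => if BExt (mkV k r m hm w) ⟨⟨m+1, by omega⟩, w'⟩
        then v ⟨⟨m+1, by omega⟩, w'⟩ else 0)).symm).trans ?_
      rw [Fintype.sum_prod_type]
      refine Finset.sum_congr rfl (fun a _ => ?_)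
      simp only [key, Finset.sum_ite_eq', Finset.mem_univ, if_true]
      rfl
    · intro b _ hb
      apply Finset.sum_eq_zero
      intro w' _
      rw [if_neg]
      rintro ⟨h1, -⟩
      exact hb (Fin.ext h1)
  · rw [dif_neg h]
    apply Finset.sum_eq_zero
    intro m' _
    apply Finset.sum_eq_zero
    intro w' _
    rw [if_neg]
    rintro ⟨h1, -⟩
    have h2 : (m' : ℕ) = m + 1 := h1
    have := m'.isLt
    omega

open Classical in
lemma sum_parent (k r : ℕ) (v : V k r → ℝ) (m : ℕ) (hm : m ≤ r) (w : Fin m → Fin k) :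
    ∑ y : V k r, (if BExt y (mkV k r m hm w) then v y else 0) =
      if h : 0 < m then
        v (mkV k r (m-1) (by omega) (fun i => w ⟨(i:ℕ), by have := i.isLt; omega⟩)) else 0 := by
  rw [← Finset.univ_sigma_univ, Finset.sum_sigma]
  by_cases h : 0 < m
  · rw [dif_pos h]
    obtain ⟨n, rfl⟩ : ∃ n, m = n + 1 := ⟨m - 1, by omega⟩
    rw [Finset.sum_eq_single_of_mem (⟨n, by omega⟩ : Fin (r+1)) (Finset.mem_univ _)]
    · have key : ∀ (u : Fin n → Fin k),
          BExt (⟨⟨n, by omega⟩, u⟩ : V k r) (mkV k r (n+1) hm w) ↔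
            u = (fun i : Fin n => w ⟨(i:ℕ), by have := i.isLt; omega⟩) := by
        intro u
        constructor
        · rintro ⟨h1, hw⟩
          funext i
          exact (hw i).symm
        · rintro rfl
          exact ⟨rfl, fun i => rfl⟩
      simp only [key, Finset.sum_ite_eq', Finset.mem_univ, if_true]
      rfl
    · intro b _ hb
      apply Finset.sum_eq_zero
      intro w' _
      rw [if_neg]
      rintro ⟨h1, -⟩
      have h2 : (n : ℕ) + 1 = (b : ℕ) + 1 := h1
      have h3 : (b : ℕ) = n := by omega
      exact hb (Fin.ext h3)
  · rw [dif_neg h]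
    apply Finset.sum_eq_zero
    intro m' _
    apply Finset.sum_eq_zero
    intro w' _
    rw [if_neg]
    rintro ⟨h1, -⟩
    have h2 : (m : ℕ) = (m' : ℕ) + 1 := h1
    omega

open Classical in
lemma mulVec_apply (k r : ℕ) (v : V k r → ℝ) (m : ℕ) (hm : m ≤ r) (w : Fin m → Fin k) :
    (BAdjMatrix (fun _ => k) r).mulVec v (mkV k r m hm w) =
      (if h : m < r then ∑ a : Fin k, v (mkV k r (m+1) h (Fin.snoc w a)) else 0)
      + (if h : 0 < m then
          v (mkV k r (m-1) (by omega) (fun i => w ⟨(i:ℕ), by have := i.isLt; omega⟩)) else 0) := by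
  have hsplit : ∀ y : V k r, BAdjMatrix (fun _ => k) r (mkV k r m hm w) y * v y
      = (if BExt (mkV k r m hm w) y then v y else 0)
        + (if BExt y (mkV k r m hm w) then v y else 0) := by
    intro y
    unfold BAdjMatrix BAdj
    by_cases h1 : BExt (mkV k r m hm w) y <;> by_cases h2 : BExt y (mkV k r m hm w)
    · exfalso
      obtain ⟨a1, -⟩ := h1
      obtain ⟨a2, -⟩ := h2
      omega
    all_goals simp [h1, h2]
  rw [Matrix.mulVec, dotProduct]
  simp only [hsplit]
  rw [Finset.sum_add_distrib, sum_child k r v m hm w, sum_parent k r v m hm w]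

noncomputable def vC (k r : ℕ) (lam : ℝ) (c : Fin k → ℝ) (x : V k r) : ℝ :=
  if h : 0 < (x.1 : ℕ) then c (x.2 ⟨0, h⟩) * ff k lam (x.1 : ℕ) else 0

lemma vC_mk (k r : ℕ) (lam : ℝ) (c : Fin k → ℝ) (m : ℕ) (hm : m ≤ r) (w : Fin m → Fin k) :
    vC k r lam c (mkV k r m hm w) =
      if h : 0 < m then c (w ⟨0, h⟩) * ff k lam m else 0 := rfl

lemma eigen (k r : ℕ) (hk : 2 ≤ k) (hr : 1 ≤ r) (lam : ℝ)
    (hroot : (Ppoly k (r+1)).eval lam = 0) (c : Fin k → ℝ) (hc : ∑ a, c a = 0) :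
    (BAdjMatrix (fun _ => k) r).mulVec (vC k r lam c) = lam • (vC k r lam c) := by
  have hk0 : 0 < k := by omega
  funext x
  obtain ⟨m, hm, w, rfl⟩ : ∃ (m : ℕ) (hm : m ≤ r) (w : Fin m → Fin k), x = mkV k r m hm w :=
    ⟨(x.1 : ℕ), by omega, x.2, rfl⟩
  rw [mulVec_apply, Pi.smul_apply, smul_eq_mul, vC_mk]
  rcases Nat.eq_zero_or_pos m with h0 | h0
  · subst h0
    rw [dif_pos (show 0 < r by omega)]
    simp only [dif_neg (Nat.lt_irrefl 0)]
    rw [add_zero, mul_zero]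
    have hv : ∀ a : Fin k, vC k r lam c (mkV k r 1 (by omega) (Fin.snoc w a))
        = c a * ff k lam 1 := by
      intro a
      rw [vC_mk]
      exact dif_pos Nat.one_pos
    rw [Finset.sum_congr rfl (fun a _ => hv a), ← Finset.sum_mul, hc, zero_mul]
  · obtain ⟨n, rfl⟩ : ∃ n, m = n + 1 := ⟨m - 1, by omega⟩
    have hvp : vC k r lam c (mkV k r (n+1-1) (by omega)
        (fun i => w ⟨(i:ℕ), by have := i.isLt; omega⟩)) = c (w ⟨0, h0⟩) * ff k lam n := by
      rw [vC_mk]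
      rcases Nat.eq_zero_or_pos n with hn | hn
      · subst hn
        rw [dif_neg (by omega : ¬ 0 < 0 + 1 - 1), ff_zero, mul_zero]
      · exact dif_pos (show 0 < n + 1 - 1 by omega)
    simp only [dif_pos h0]
    rcases Nat.lt_or_ge (n+1) r with hlt | hge
    · rw [dif_pos hlt, hvp]
      have hv : ∀ a : Fin k, vC k r lam c (mkV k r (n+2) hlt (Fin.snoc w a))
          = c (w ⟨0, h0⟩) * ff k lam (n+2) := by
        intro a
        rw [vC_mk, dif_pos (show 0 < n+2 by omega)]
        congr 2
      rw [Finset.sum_congr rfl (fun a _ => hv a), Finset.sum_const, Finset.card_univ,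
        Fintype.card_fin, nsmul_eq_mul]
      linear_combination (c (w ⟨0, h0⟩)) * ff_rec k lam hk0 n
    · rw [dif_neg (by omega), hvp, zero_add]
      have hleaf := ff_leaf k lam hk0 n (by rw [show n + 2 = r + 1 by omega]; exact hroot)
      linear_combination (c (w ⟨0, h0⟩)) * hleaf

noncomputable def Phi (k r : ℕ) (lam : ℝ) : (Fin k → ℝ) →ₗ[ℝ] (V k r → ℝ) where
  toFun c := vC k r lam c
  map_add' c d := by
    funext x
    simp only [vC, Pi.add_apply]
    split <;> [ring; simp]
  map_smul' t c := by
    funext x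
    simp only [vC, Pi.smul_apply, smul_eq_mul, RingHom.id_apply]
    split <;> [ring; simp]

noncomputable def sumF (k : ℕ) : (Fin k → ℝ) →ₗ[ℝ] ℝ where
  toFun c := ∑ a, c a
  map_add' c d := by simp [Finset.sum_add_distrib]
  map_smul' t c := by simp [Finset.mul_sum]

lemma Phi_injective (k r : ℕ) (lam : ℝ) (hk : 2 ≤ k) (hr : 1 ≤ r) :
    Function.Injective (Phi k r lam) := by
  have hk' : (k : ℝ) ≠ 0 := by positivity
  intro c d h
  funext a
  have h1 := congrFun h (mkV k r 1 hr (fun _ => a))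
  have h2 : vC k r lam c (mkV k r 1 hr (fun _ => a))
      = vC k r lam d (mkV k r 1 hr (fun _ => a)) := h1
  rw [vC_mk, vC_mk, dif_pos Nat.one_pos, dif_pos Nat.one_pos, ff_one] at h2
  have h3 : c a * (1 / (k:ℝ)) = d a * (1 / (k:ℝ)) := h2
  field_simp at h3
  exact h3

lemma finrank_ker_sumF (k : ℕ) (hk : 2 ≤ k) :
    Module.finrank ℝ (LinearMap.ker (sumF k)) = k - 1 := by
  have hk' : (k : ℝ) ≠ 0 := by positivity
  have hsurj : Function.Surjective (sumF k) := by
    intro y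
    refine ⟨fun _ => y / k, ?_⟩
    show ∑ _a : Fin k, y / (k:ℝ) = y
    rw [Finset.sum_const, Finset.card_univ, Fintype.card_fin, nsmul_eq_mul]
    field_simp
  have hrank := LinearMap.finrank_range_add_finrank_ker (sumF k)
  rw [LinearMap.range_eq_top.mpr hsurj, finrank_top, Module.finrank_self] at hrank
  have hpi : Module.finrank ℝ (Fin k → ℝ) = k := by
    simp [Module.finrank_pi]
  rw [hpi] at hrank
  omega

/-- Let `k ≥ 2`, `r ≥ 1`. If `lam` is a root of `P^k_{r+1}`, then
`lam` is an eigenvalue of the adjacency matrix of `X_r^k` and the `lam`-eigenspace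
has dimension at least `k − 1`. -/
theorem eigenspace_of_root_Prplus1 (k r : ℕ) (hk : 2 ≤ k) (hr : 1 ≤ r) (lam : ℝ)
    (hroot : (Ppoly k (r + 1)).IsRoot lam) :
    IsAdjEigenvalue (fun _ => k) r lam ∧ k - 1 ≤ adjEigDim (fun _ => k) r lam := by
  classical
  have hroot' : (Ppoly k (r+1)).eval lam = 0 := hroot
  set K := LinearMap.ker ((BAdjMatrix (fun _ => k) r).mulVecLin - lam • LinearMap.id) with hK
  have hmem : ∀ c : Fin k → ℝ, c ∈ LinearMap.ker (sumF k) → Phi k r lam c ∈ K := by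
    intro c hc
    rw [LinearMap.mem_ker] at hc ⊢
    have he := eigen k r hk hr lam hroot' c hc
    rw [LinearMap.sub_apply, LinearMap.smul_apply, LinearMap.id_apply]
    rw [sub_eq_zero]
    show (BAdjMatrix (fun _ => k) r).mulVecLin (vC k r lam c) = lam • (vC k r lam c)
    rw [Matrix.mulVecLin_apply]
    exact he
  have hmap : Submodule.map (Phi k r lam) (LinearMap.ker (sumF k)) ≤ K := by
    rintro _ ⟨c, hc, rfl⟩
    exact hmem c hc
  have hdim : k - 1 ≤ Module.finrank ℝ K := by
    have e1 := LinearEquiv.finrank_eq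
      (Submodule.equivMapOfInjective (Phi k r lam) (Phi_injective k r lam hk hr)
        (LinearMap.ker (sumF k)))
    have e2 := Submodule.finrank_mono hmap
    rw [finrank_ker_sumF k hk] at e1
    exact le_trans (le_of_eq e1) e2
  constructor
  · have hKne : K ≠ ⊥ := by
      intro hbot
      rw [hbot, finrank_bot] at hdim
      omega
    obtain ⟨v, hvK, hv0⟩ := Submodule.exists_mem_ne_zero_of_ne_bot hKne
    refine ⟨v, hv0, ?_⟩
    rw [hK, LinearMap.mem_ker, LinearMap.sub_apply, LinearMap.smul_apply,
      LinearMap.id_apply, sub_eq_zero, Matrix.mulVecLin_apply] at hvK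
    exact hvK
  · exact hdim
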